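/- arXiv:2203.07590 — 2 statements merged into one kernel-verified Lean document; each statement's English description precedes it below -/
import Mathlib

section
/- For θ, θ', φ, φ' real, as N → ∞ with θ = r/√N and θ' = r'/√N fixed in r, r', the expression e^{i(φ−φ')} sin(θ/2) sin(θ'/2) + cos(θ/2) cos(θ'/2) equals 1 + (1/(4N))·(z·conj(w) − (|z|²+|w|²)/2) + o(1/N), where z = r·e^{iφ} and w = r'·e^{iφ'}. -/
/-!
Put `x = r / (2√N)`, `y = r' / (2√N)` and `u = e^{i(φ-φ')}`. Since `z w̄ = r r' u` and
`|z|² = r²`, `|w|² = r'²`, the claimed main term is `1 + u x y - (x² + y²)/2`, the second-order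
Taylor polynomial of `u sin x sin y + cos x cos y`. The Taylor remainder is `O(x⁴ + y⁴)`,
uniformly in `|u| ≤ 1`, hence `O(1/N²) = o(1/N)`.
-/

open Filter Complex Asymptotics Topology

lemma abs_sin_mul_sin_sub_mul_le (x y : ℝ) :
    |Real.sin x * Real.sin y - x * y| ≤ (x ^ 4 + y ^ 4) / 6 := by
  have hsx := Real.abs_sub_sin_le x
  have hsy := Real.abs_sub_sin_le y
  calc |Real.sin x * Real.sin y - x * y|
      = |Real.sin x * (Real.sin y - y) + y * (Real.sin x - x)| := by ring_nf
    _ ≤ |x| * (|y| ^ 3 / 6) + |y| * (|x| ^ 3 / 6) := by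
      grw [abs_add_le, abs_mul, abs_mul, Real.abs_sin_le_abs, abs_sub_comm, hsy, abs_sub_comm, hsx]
    _ ≤ (|x| ^ 4 + |y| ^ 4) / 6 := by
      have hq : 0 ≤ |x| ^ 2 + |x| * |y| + |y| ^ 2 := by positivity
      nlinarith [mul_nonneg (sq_nonneg (|x| - |y|)) hq]
    _ = (x ^ 4 + y ^ 4) / 6 := by
      rw [Even.pow_abs (by decide), Even.pow_abs (by decide)]

lemma abs_cos_mul_cos_sub_le {x y : ℝ} (hx : |x| ≤ 1) (hy : |y| ≤ 1) :
    |Real.cos x * Real.cos y - (1 - (x ^ 2 + y ^ 2) / 2)| ≤ (x ^ 4 + y ^ 4) / 4 := by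
  have hcx := Real.cos_bound hx
  have hcy := Real.cos_bound hy
  have hx1 : |1 - Real.cos x| ≤ x ^ 2 / 2 := by
    rw [abs_of_nonneg (by linarith [Real.cos_le_one x])]
    linarith [Real.one_sub_sq_div_two_le_cos (x := x)]
  have hy1 : |1 - Real.cos y| ≤ y ^ 2 / 2 := by
    rw [abs_of_nonneg (by linarith [Real.cos_le_one y])]
    linarith [Real.one_sub_sq_div_two_le_cos (x := y)]
  calc |Real.cos x * Real.cos y - (1 - (x ^ 2 + y ^ 2) / 2)|
      = |(Real.cos x - (1 - x ^ 2 / 2)) + (Real.cos y - (1 - y ^ 2 / 2))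
          + (1 - Real.cos x) * (1 - Real.cos y)| := by ring_nf
    _ ≤ |x| ^ 4 * (5 / 96) + |y| ^ 4 * (5 / 96) + x ^ 2 / 2 * (y ^ 2 / 2) := by
      grw [abs_add_le, abs_add_le, abs_mul, hcx, hcy, hx1, hy1]
    _ ≤ (x ^ 4 + y ^ 4) / 4 := by
      rw [pow_abs, pow_abs, abs_of_nonneg (by positivity), abs_of_nonneg (by positivity)]
      nlinarith [sq_nonneg (x ^ 2 - y ^ 2)]

lemma norm_kernel_sub_quadratic_le {u : ℂ} (hu : ‖u‖ ≤ 1) {x y : ℝ}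
    (hx : |x| ≤ 1) (hy : |y| ≤ 1) :
    ‖u * Real.sin x * Real.sin y + Real.cos x * Real.cos y - (1 + u * x * y - (x ^ 2 + y ^ 2) / 2)‖
      ≤ x ^ 4 + y ^ 4 := by
  have hsplit : u * Real.sin x * Real.sin y + Real.cos x * Real.cos y
        - (1 + u * x * y - (x ^ 2 + y ^ 2) / 2)
      = u * ((Real.sin x * Real.sin y - x * y : ℝ) : ℂ)
        + ((Real.cos x * Real.cos y - (1 - (x ^ 2 + y ^ 2) / 2) : ℝ) : ℂ) := by
    push_cast; ring
  have h4 : 0 ≤ x ^ 4 + y ^ 4 := by positivity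
  calc _ ≤ 1 * ((x ^ 4 + y ^ 4) / 6) + (x ^ 4 + y ^ 4) / 4 := by
        rw [hsplit]
        grw [norm_add_le, norm_mul, norm_real, norm_real, Real.norm_eq_abs, Real.norm_eq_abs, hu,
          abs_sin_mul_sin_sub_mul_le, abs_cos_mul_cos_sub_le hx hy]
    _ ≤ x ^ 4 + y ^ 4 := by linarith

lemma eventually_abs_mul_le_one (a : ℝ) : ∀ᶠ s in 𝓝 (0 : ℝ), |a * s| ≤ 1 := by
  have h : Tendsto (fun s : ℝ => a * s) (𝓝 0) (𝓝 0) := by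
    simpa using (continuous_const_mul a).tendsto 0
  filter_upwards [h.eventually (Icc_mem_nhds (neg_lt_zero.2 one_pos) one_pos)] with s hs
  exact abs_le.2 hs

lemma kernel_sub_quadratic_isBigO {u : ℂ} (hu : ‖u‖ ≤ 1) (a b : ℝ) :
    (fun s : ℝ => u * Real.sin (a * s) * Real.sin (b * s) + Real.cos (a * s) * Real.cos (b * s)
        - (1 + u * (a * s : ℝ) * (b * s : ℝ) - ((a * s : ℝ) ^ 2 + (b * s : ℝ) ^ 2) / 2))
      =O[𝓝 0] fun s => s ^ 4 := by
  refine IsBigO.of_bound (a ^ 4 + b ^ 4) ?_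
  filter_upwards [eventually_abs_mul_le_one a, eventually_abs_mul_le_one b] with s ha hb
  calc _ ≤ (a * s) ^ 4 + (b * s) ^ 4 := norm_kernel_sub_quadratic_le hu ha hb
    _ = (a ^ 4 + b ^ 4) * ‖s ^ 4‖ := by rw [Real.norm_of_nonneg (by positivity)]; ring

lemma ofReal_mul_exp_mul_conj (r r' φ φ' : ℝ) :
    (r * exp (I * φ)) * (starRingEnd ℂ) (r' * exp (I * φ')) = r * r' * exp (I * (φ - φ')) := by
  rw [map_mul, ← exp_conj, conj_ofReal, map_mul, conj_I, conj_ofReal, mul_mul_mul_comm, ← exp_add]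
  ring_nf

lemma norm_ofReal_mul_exp_I_mul (r φ : ℝ) : ‖(r : ℂ) * exp (I * φ)‖ = |r| := by
  rw [norm_mul, norm_real, Real.norm_eq_abs, mul_comm I, norm_exp_ofReal_mul_I, mul_one]

lemma tendsto_inv_sqrt_natCast_atTop : Tendsto (fun N : ℕ => (Real.sqrt N)⁻¹) atTop (𝓝 0) :=
  tendsto_inv_atTop_zero.comp (Real.tendsto_sqrt_atTop.comp tendsto_natCast_atTop_atTop)

theorem spherical_kernel_expansion (r r' φ φ' : ℝ) (z w : ℂ)
    (hz : z = (r : ℂ) * Complex.exp (Complex.I * φ))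
    (hw : w = (r' : ℂ) * Complex.exp (Complex.I * φ')) :
    (fun N : ℕ =>
        (Complex.exp (Complex.I * ((φ : ℂ) - φ')) *
            (Real.sin (r / Real.sqrt N / 2) : ℝ) * (Real.sin (r' / Real.sqrt N / 2) : ℝ) +
          (Real.cos (r / Real.sqrt N / 2) : ℝ) * (Real.cos (r' / Real.sqrt N / 2) : ℝ))
        - (1 + (1 / (4 * (N : ℂ))) *
            (z * (starRingEnd ℂ) w -
              ((‖z‖ ^ 2 + ‖w‖ ^ 2 : ℝ) : ℂ) / 2)))
      =o[atTop] (fun N : ℕ => 1 / (N : ℝ)) := by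
  have hu : ‖exp (I * ((φ : ℂ) - φ'))‖ ≤ 1 := by
    rw [← ofReal_sub, mul_comm, norm_exp_ofReal_mul_I]
  have hremainder := ((kernel_sub_quadratic_isBigO hu (r / 2) (r' / 2)).trans_isLittleO
    (isLittleO_pow_pow (by norm_num : 2 < 4))).comp_tendsto tendsto_inv_sqrt_natCast_atTop
  refine hremainder.congr (fun N => ?_) (fun N => ?_)
  · have hN : ((Real.sqrt N : ℝ) : ℂ) ^ 2 = N := by
      rw [← ofReal_pow, Real.sq_sqrt N.cast_nonneg, ofReal_natCast]
    have hdiv : ∀ a t : ℝ, a / t / 2 = a / 2 * t⁻¹ := fun a t => by ring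
    simp only [Function.comp_apply, hdiv, hz, hw, ofReal_mul_exp_mul_conj,
      norm_ofReal_mul_exp_I_mul, sq_abs, ← hN]
    push_cast
    ring
  · simp only [Function.comp_apply, inv_pow, Real.sq_sqrt N.cast_nonneg, one_div]
end

section
/- For λ > −1/2, λ ≠ 0, n ≥ 0, and real x: ∑_{ℓ=0}^{n} ((ℓ+λ)/λ) C_ℓ^λ(x) = ((2n+2λ+1)/(2λ+1)) · binomial(2λ+n, n) · Q_n^{(λ+1/2, λ−1/2)}(x), where Q_n^{(α,β)}(x) = P_n^{(α,β)}(x)/P_n^{(α,β)}(1). -/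
open Finset

/-- The Pochhammer symbol `(a)_n = a (a+1) ⋯ (a+n-1)` for real `a`. -/
def poch (a : ℝ) (n : ℕ) : ℝ := ∏ i ∈ Finset.range n, (a + i)

/-- Generalized binomial coefficient `binomial(a, n) = a(a-1)⋯(a-n+1)/n!`. -/
noncomputable def rchoose (a : ℝ) (n : ℕ) : ℝ := poch (a - n + 1) n / (Nat.factorial n : ℝ)

/-- The Gegenbauer (ultraspherical) polynomial. -/
noncomputable def gegenbauerC (n : ℕ) (lam x : ℝ) : ℝ :=
  (poch (2 * lam) n / (Nat.factorial n : ℝ)) *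
    ∑ k ∈ Finset.range (n + 1),
      poch (-(n : ℝ)) k * poch ((n : ℝ) + 2 * lam) k /
        (poch (lam + 1 / 2) k * (Nat.factorial k : ℝ)) * ((1 - x) / 2) ^ k

/-- The Jacobi polynomial. -/
noncomputable def jacobiP (n : ℕ) (α β x : ℝ) : ℝ :=
  (poch (α + 1) n / (Nat.factorial n : ℝ)) *
    ∑ k ∈ Finset.range (n + 1),
      poch (-(n : ℝ)) k * poch ((n : ℝ) + α + β + 1) k /
        (poch (α + 1) k * (Nat.factorial k : ℝ)) * ((1 - x) / 2) ^ k

/-- Normalized Jacobi polynomial `Q_n^{(α,β)}(x) = P_n^{(α,β)}(x) / P_n^{(α,β)}(1)`. -/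
noncomputable def jacobiQ (n : ℕ) (α β x : ℝ) : ℝ := jacobiP n α β x / jacobiP n α β 1

/-! Expand both sides in powers of `y = (1 - x) / 2`. After exchanging the two sums, the
coefficient of `y ^ k` on the left is a sum over `k ≤ ℓ ≤ n`; writing `ℓ = k + m`, its summand
becomes a factor depending only on `k` times `(2m + b) (b)_m / m!` with `b = 2λ + 2k`, and
these terms telescope: `∑_{m ≤ N} (2m + b) (b)_m / m! = (2N + b + 1) (b)_{N+1} / ((b + 1) N!)`.
The result is exactly the coefficient of `y ^ k` in the normalized Jacobi polynomial. -/

open Nat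

lemma poch_zero (a : ℝ) : poch a 0 = 1 := prod_range_zero _

lemma poch_succ (a : ℝ) (n : ℕ) : poch a (n + 1) = poch a n * (a + n) := prod_range_succ _ _

lemma poch_add (a : ℝ) (m n : ℕ) : poch a (m + n) = poch a m * poch (a + m) n := by
  simp only [poch, prod_range_add, Nat.cast_add, add_assoc]

lemma poch_succ' (a : ℝ) (n : ℕ) : poch a (n + 1) = a * poch (a + 1) n := by
  rw [add_comm n, poch_add]; simp [poch]

lemma poch_pos {a : ℝ} (ha : 0 < a) (n : ℕ) : 0 < poch a n :=
  prod_pos fun i _ => by positivity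

lemma poch_neg (a : ℝ) (k : ℕ) : poch (-a) k = (-1) ^ k * poch (a - k + 1) k := by
  induction k with
  | zero => simp [poch_zero]
  | succ k ih =>
    have h : a - ↑(k + 1) + 1 = a - k := by push_cast; ring
    rw [poch_succ, ih, h, poch_succ', pow_succ]
    ring

lemma factorial_mul_poch_natCast_add_one (m k : ℕ) : (m ! : ℝ) * poch (m + 1) k = (m + k)! := by
  induction k with
  | zero => simp [poch_zero]
  | succ k ih =>
    rw [poch_succ, ← mul_assoc, ih, ← add_assoc, factorial_succ]
    push_cast
    ring

lemma rchoose_add_natCast (a : ℝ) (n : ℕ) : rchoose (a + n) n = poch (a + 1) n / n ! := by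
  rw [rchoose, add_sub_cancel_right]

lemma sum_range_two_mul_add_mul_poch_div_factorial {b : ℝ} (hb : b + 1 ≠ 0) (N : ℕ) :
    ∑ m ∈ range (N + 1), (2 * m + b) * poch b m / m ! =
      (2 * N + b + 1) * poch b (N + 1) / ((b + 1) * N !) := by
  induction N with
  | zero =>
    rw [sum_range_one, zero_add, poch_succ, poch_zero]
    push_cast
    field_simp
    ring
  | succ N ih =>
    rw [sum_range_succ, ih, poch_succ b (N + 1), factorial_succ]
    push_cast
    field_simp
    ring

noncomputable def gegenbauerCoeff (ℓ : ℕ) (lam : ℝ) (k : ℕ) : ℝ :=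
  poch (2 * lam) ℓ / ℓ ! *
    (poch (-(ℓ : ℝ)) k * poch (ℓ + 2 * lam) k / (poch (lam + 1 / 2) k * k !))

noncomputable def jacobiQCoeff (n : ℕ) (α β : ℝ) (k : ℕ) : ℝ :=
  poch (-(n : ℝ)) k * poch (n + α + β + 1) k / (poch (α + 1) k * k !)

lemma gegenbauerC_eq_sum (ℓ : ℕ) (lam x : ℝ) :
    gegenbauerC ℓ lam x = ∑ k ∈ range (ℓ + 1), gegenbauerCoeff ℓ lam k * ((1 - x) / 2) ^ k := by
  simp only [gegenbauerC, gegenbauerCoeff, mul_sum, mul_assoc]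

lemma jacobiP_one (n : ℕ) (α β : ℝ) : jacobiP n α β 1 = poch (α + 1) n / n ! := by
  rw [jacobiP, sum_eq_single_of_mem 0 (by simp) fun k _ hk => by simp [zero_pow hk]]
  simp [poch_zero]

lemma jacobiQ_eq_sum {n : ℕ} {α : ℝ} (β x : ℝ) (h : poch (α + 1) n ≠ 0) :
    jacobiQ n α β x = ∑ k ∈ range (n + 1), jacobiQCoeff n α β k * ((1 - x) / 2) ^ k := by
  rw [jacobiQ, jacobiP_one, jacobiP, mul_div_cancel_left₀ _ (div_ne_zero h (by positivity))]
  rfl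

lemma poch_neg_natCast_add (k m : ℕ) :
    poch (-((k + m : ℕ) : ℝ)) k = (-1) ^ k * (k + m)! / m ! := by
  have h : ((k + m : ℕ) : ℝ) - k + 1 = m + 1 := by push_cast; ring
  rw [poch_neg, h, eq_div_iff (by positivity), mul_assoc, mul_comm (poch _ k),
    factorial_mul_poch_natCast_add_one, add_comm]

lemma gegenbauerCoeff_add_left (lam : ℝ) (k m : ℕ) :
    (((k + m : ℕ) : ℝ) + lam) / lam * gegenbauerCoeff (k + m) lam k =
      (-1) ^ k * poch (2 * lam) (2 * k) / (2 * lam * poch (lam + 1 / 2) k * k !) *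
        ((2 * m + (2 * lam + 2 * k)) * poch (2 * lam + 2 * k) m / m !) := by
  have hsplit : poch (2 * lam) (k + m) * poch ((k + m : ℕ) + 2 * lam) k =
      poch (2 * lam) (2 * k) * poch (2 * lam + 2 * k) m := by
    rw [add_comm _ (2 * lam), ← poch_add, show k + m + k = 2 * k + m by ring, poch_add]
    push_cast; rfl
  have hfac : ((k + m)! : ℝ) * ((k + m)! : ℝ)⁻¹ = 1 := mul_inv_cancel₀ (by positivity)
  rw [gegenbauerCoeff, poch_neg_natCast_add]
  push_cast at hsplit ⊢
  linear_combination (k + m + lam) / lam * (-1) ^ k / (m ! * poch (lam + 1 / 2) k * k !) *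
    (poch (2 * lam) (k + m) * poch (k + m + 2 * lam) k * hfac + hsplit)

lemma telescoped_eq_jacobiQCoeff {lam : ℝ} (hlam0 : lam ≠ 0) (k N : ℕ) :
    (-1) ^ k * poch (2 * lam) (2 * k) / (2 * lam * poch (lam + 1 / 2) k * k !) *
        ((2 * N + (2 * lam + 2 * k) + 1) * poch (2 * lam + 2 * k) (N + 1) /
          ((2 * lam + 2 * k + 1) * N !)) =
      (2 * ((k + N : ℕ) : ℝ) + 2 * lam + 1) / (2 * lam + 1) *
        (poch (2 * lam + 1) (k + N) / (k + N)!) *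
          jacobiQCoeff (k + N) (lam + 1 / 2) (lam - 1 / 2) k := by
  have hnum : poch (2 * lam) (2 * k) * poch (2 * lam + 2 * k) (N + 1) =
      2 * lam * (poch (2 * lam + 1) (k + N) *
        poch (((k + N : ℕ) : ℝ) + (lam + 1 / 2) + (lam - 1 / 2) + 1) k) := by
    calc _ = poch (2 * lam) (k + N + k + 1) := by
          rw [show k + N + k + 1 = 2 * k + (N + 1) by ring, poch_add (2 * lam) (2 * k)]
          push_cast; rfl
      _ = _ := by
          rw [poch_succ', poch_add]; congr 3; push_cast; ring
  have hden : poch (lam + 1 / 2) k * (2 * lam + 2 * k + 1) =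
      (2 * lam + 1) * poch (lam + 1 / 2 + 1) k := by
    linear_combination 2 * (poch_succ (lam + 1 / 2) k).symm.trans (poch_succ' _ k)
  calc _ = (-1) ^ k * (2 * N + 2 * lam + 2 * k + 1) / (N ! * k !) / 2 / lam *
          (poch (2 * lam) (2 * k) * poch (2 * lam + 2 * k) (N + 1)) *
          (poch (lam + 1 / 2) k * (2 * lam + 2 * k + 1))⁻¹ := by
        simp only [div_eq_mul_inv, mul_inv]; ring
    _ = _ := by
        rw [hnum, hden, jacobiQCoeff, poch_neg_natCast_add]
        field_simp
        push_cast
        ring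

lemma sum_Icc_gegenbauerCoeff {lam : ℝ} (hlam : -(1 / 2) < lam) (hlam0 : lam ≠ 0) {k n : ℕ}
    (hk : k ≤ n) :
    ∑ ℓ ∈ Icc k n, ((ℓ : ℝ) + lam) / lam * gegenbauerCoeff ℓ lam k =
      (2 * n + 2 * lam + 1) / (2 * lam + 1) * rchoose (2 * lam + n) n *
        jacobiQCoeff n (lam + 1 / 2) (lam - 1 / 2) k := by
  obtain ⟨N, rfl⟩ := Nat.exists_eq_add_of_le hk
  have hb : 0 < 2 * lam + 2 * k + 1 := by linarith [k.cast_nonneg (α := ℝ)]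
  rw [← Ico_add_one_right_eq_Icc, sum_Ico_eq_sum_range, show k + N + 1 - k = N + 1 by omega]
  simp_rw [gegenbauerCoeff_add_left, ← mul_sum]
  rw [sum_range_two_mul_add_mul_poch_div_factorial hb.ne', rchoose_add_natCast,
    telescoped_eq_jacobiQCoeff hlam0]

theorem gegenbauer_sum_jacobi (lam : ℝ) (hlam : -(1 / 2) < lam) (hlam0 : lam ≠ 0)
    (n : ℕ) (x : ℝ) :
    ∑ ℓ ∈ Finset.range (n + 1), (((ℓ : ℝ) + lam) / lam) * gegenbauerC ℓ lam x
      = (2 * n + 2 * lam + 1) / (2 * lam + 1) * rchoose (2 * lam + n) n *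
          jacobiQ n (lam + 1 / 2) (lam - 1 / 2) x := by
  have hpoch : poch (lam + 1 / 2 + 1) n ≠ 0 := (poch_pos (by linarith) n).ne'
  calc _ = ∑ ℓ ∈ range (n + 1), ∑ k ∈ range (ℓ + 1),
          ((ℓ : ℝ) + lam) / lam * gegenbauerCoeff ℓ lam k * ((1 - x) / 2) ^ k := by
        simp_rw [gegenbauerC_eq_sum, mul_sum, mul_assoc]
    _ = ∑ k ∈ range (n + 1), (∑ ℓ ∈ Icc k n, ((ℓ : ℝ) + lam) / lam * gegenbauerCoeff ℓ lam k) *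
          ((1 - x) / 2) ^ k := by
        simp_rw [sum_mul]
        exact sum_comm' fun ℓ k => by simp only [mem_range, mem_Icc]; omega
    _ = _ := by
        rw [jacobiQ_eq_sum _ _ hpoch, mul_sum]
        refine sum_congr rfl fun k hk => ?_
        rw [sum_Icc_gegenbauerCoeff hlam hlam0 (Nat.lt_succ_iff.mp (mem_range.mp hk)), mul_assoc]
end
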